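/- Let Z = L + S with Z, L, S ∈ ℝ^{N×T}, rank(L) = K, let λ > 0 satisfy λ ≥ (2/(1−c))‖S‖ for some constant c ∈ (0,1), and let L̂ be any minimizer over A ∈ ℝ^{N×T} of ‖Z − A‖_F² + λ‖A‖_*. Then Δ = L̂ − L satisfies ‖Δ‖_F² + cλ‖𝒫(Δ)‖_* ≤ (2 − c)λ‖ℳ(Δ)‖_*; in particular the cone condition ‖𝒫(Δ)‖_* ≤ ((2 − c)/c)·‖ℳ(Δ)‖_* holds. -/

import Mathlib

open Matrix MeasureTheory ProbabilityTheory

noncomputable def frob {m n : Type*} [Fintype m] [Fintype n] (A : Matrix m n ℝ) : ℝ :=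
  Real.sqrt (∑ i, ∑ j, (A i j) ^ 2)

noncomputable def opNorm {m n : Type*} [Fintype m] [Fintype n] [DecidableEq n]
    (A : Matrix m n ℝ) : ℝ :=
  ‖LinearMap.toContinuousLinearMap (Matrix.toEuclideanLin A)‖

noncomputable def nucNorm {m n : Type*} [Fintype m] [Fintype n] [DecidableEq n]
    (A : Matrix m n ℝ) : ℝ :=
  ∑ j, Real.sqrt (((by simpa [Matrix.conjTranspose_eq_transpose_of_trivial] using
    Matrix.isHermitian_conjTranspose_mul_self A : (Aᵀ * A).IsHermitian)).eigenvalues j)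

set_option linter.unusedSectionVars false
set_option linter.unusedVariables false
set_option maxHeartbeats 1000000

namespace NucAux

variable {m n : Type*} [Fintype m] [Fintype n] [DecidableEq n]

/-- entrywise inner product of matrices -/
noncomputable def ip (X Y : Matrix m n ℝ) : ℝ := ∑ i, ∑ k, X i k * Y i k

lemma dot1 (M : Matrix m n ℝ) (a : n → ℝ) (b : m → ℝ) :
    (M *ᵥ a) ⬝ᵥ b = a ⬝ᵥ (Mᵀ *ᵥ b) := by
  rw [dotProduct_comm, dotProduct_mulVec, dotProduct_comm, mulVec_transpose]

lemma gram (A : Matrix m n ℝ) (x y : n → ℝ) :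
    (A *ᵥ x) ⬝ᵥ (A *ᵥ y) = x ⬝ᵥ ((Aᴴ * A) *ᵥ y) := by
  rw [dot1, ← mulVec_mulVec, conjTranspose_eq_transpose_of_trivial]

noncomputable def ev (A : Matrix m n ℝ) (j : n) : ℝ :=
  (isHermitian_conjTranspose_mul_self A).eigenvalues j

noncomputable def evec (A : Matrix m n ℝ) (j : n) : n → ℝ :=
  ⇑((isHermitian_conjTranspose_mul_self A).eigenvectorBasis j)

lemma ev_nonneg (A : Matrix m n ℝ) (j : n) : 0 ≤ ev A j :=
  Matrix.eigenvalues_conjTranspose_mul_self_nonneg A j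

lemma evec_ortho (A : Matrix m n ℝ) (j k : n) :
    evec A j ⬝ᵥ evec A k = if j = k then 1 else 0 := by
  have h := orthonormal_iff_ite.mp
    ((isHermitian_conjTranspose_mul_self A).eigenvectorBasis).orthonormal j k
  simpa [PiLp.inner_apply, RCLike.inner_apply, conj_trivial, dotProduct, evec, mul_comm] using h

lemma evec_complete (A : Matrix m n ℝ) (a b : n) :
    ∑ j, evec A j a * evec A j b = if a = b then 1 else 0 := by
  have h := mem_unitaryGroup_iff.mp
    ((isHermitian_conjTranspose_mul_self A).eigenvectorUnitary).2
  have := congrFun (congrFun h a) b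
  simpa [Matrix.mul_apply, Matrix.star_apply, Matrix.one_apply, evec] using this

lemma mulVec_evec (A : Matrix m n ℝ) (j : n) :
    (Aᴴ * A) *ᵥ evec A j = ev A j • evec A j :=
  (isHermitian_conjTranspose_mul_self A).mulVec_eigenvectorBasis j

lemma evec_norm (A : Matrix m n ℝ) (j : n) : evec A j ⬝ᵥ evec A j = 1 := by
  simpa using evec_ortho A j j

lemma Avec_dot (A : Matrix m n ℝ) (j : n) :
    (A *ᵥ evec A j) ⬝ᵥ (A *ᵥ evec A j) = ev A j := by
  rw [gram, mulVec_evec, dotProduct_smul, smul_eq_mul, evec_norm, mul_one]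

lemma Avec_eq_zero (A : Matrix m n ℝ) (j : n) (h : ev A j = 0) :
    A *ᵥ evec A j = 0 := by
  have h2 := Avec_dot A j
  rw [h] at h2
  funext i
  have h3 := Finset.sum_eq_zero_iff_of_nonneg
    (fun i _ => mul_self_nonneg ((A *ᵥ evec A j) i)) |>.mp h2 i (Finset.mem_univ i)
  have : ((A *ᵥ evec A j) i) = 0 := by nlinarith [h3]
  simpa using this

noncomputable def dualW (A : Matrix m n ℝ) : Matrix m n ℝ :=
  Matrix.of fun i k => ∑ j, (Real.sqrt (ev A j))⁻¹ * (A *ᵥ evec A j) i * evec A j k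

lemma ip_dualW (A B : Matrix m n ℝ) :
    ip (dualW A) B = ∑ j, (Real.sqrt (ev A j))⁻¹ * ((A *ᵥ evec A j) ⬝ᵥ (B *ᵥ evec A j)) := by
  unfold ip dualW
  calc ∑ i, ∑ k, (Matrix.of fun i k =>
        ∑ j, (Real.sqrt (ev A j))⁻¹ * (A *ᵥ evec A j) i * evec A j k) i k * B i k
      = ∑ i, ∑ j, ∑ k,
          (Real.sqrt (ev A j))⁻¹ * (A *ᵥ evec A j) i * evec A j k * B i k := by
        refine Finset.sum_congr rfl fun i _ => ?_
        rw [← Finset.sum_comm]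
        exact Finset.sum_congr rfl fun k _ => by
          simp only [Matrix.of_apply, Finset.sum_mul]
    _ = ∑ j, ∑ i, ∑ k,
          (Real.sqrt (ev A j))⁻¹ * (A *ᵥ evec A j) i * evec A j k * B i k := by
        rw [Finset.sum_comm]
    _ = ∑ j, (Real.sqrt (ev A j))⁻¹ * ((A *ᵥ evec A j) ⬝ᵥ (B *ᵥ evec A j)) := by
        refine Finset.sum_congr rfl fun j _ => ?_
        rw [dotProduct, Finset.mul_sum]
        refine Finset.sum_congr rfl fun i _ => ?_
        have hB : (B *ᵥ evec A j) i = ∑ k, B i k * evec A j k := rfl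
        rw [hB, Finset.mul_sum, Finset.mul_sum]
        exact Finset.sum_congr rfl fun k _ => by ring

lemma sqrt_inv_mul_self {l : ℝ} (hl : 0 ≤ l) : (Real.sqrt l)⁻¹ * l = Real.sqrt l := by
  rcases eq_or_lt_of_le hl with h | h
  · simp [← h]
  · have hs : Real.sqrt l ≠ 0 := by positivity
    rw [inv_mul_eq_div, eq_comm, eq_div_iff hs, Real.mul_self_sqrt hl]

lemma nucNorm_eq (A : Matrix m n ℝ) : nucNorm A = ∑ j, Real.sqrt (ev A j) := rfl

lemma ip_dualW_self (A : Matrix m n ℝ) : ip (dualW A) A = nucNorm A := by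
  rw [ip_dualW, nucNorm_eq]
  exact Finset.sum_congr rfl fun j _ => by
    rw [Avec_dot, sqrt_inv_mul_self (ev_nonneg A j)]


lemma absorb_left (A : Matrix m n ℝ) (C : Matrix m m ℝ)
    (h : C * A = A) : C * dualW A = dualW A := by
  ext i k
  simp only [Matrix.mul_apply, dualW, Matrix.of_apply, Finset.mul_sum]
  rw [Finset.sum_comm]
  refine Finset.sum_congr rfl fun j _ => ?_
  have : ∑ a, C i a * ((Real.sqrt (ev A j))⁻¹ * (A *ᵥ evec A j) a * evec A j k)
      = (Real.sqrt (ev A j))⁻¹ * ((C * A) *ᵥ evec A j) i * evec A j k := by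
    rw [← Matrix.mulVec_mulVec]
    have : (C *ᵥ (A *ᵥ evec A j)) i = ∑ a, C i a * (A *ᵥ evec A j) a := rfl
    rw [this, Finset.mul_sum, Finset.sum_mul]
    exact Finset.sum_congr rfl fun a _ => by ring
  rw [this, h]

lemma evec_fix (A : Matrix m n ℝ) (C : Matrix n n ℝ) (h : C * (Aᴴ * A) = Aᴴ * A)
    (j : n) (hj : ev A j ≠ 0) : C *ᵥ evec A j = evec A j := by
  have h1 : C *ᵥ ((Aᴴ * A) *ᵥ evec A j) = (Aᴴ * A) *ᵥ evec A j := by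
    rw [Matrix.mulVec_mulVec, h]
  rw [mulVec_evec, Matrix.mulVec_smul] at h1
  have := congrArg (fun x => (ev A j)⁻¹ • x) h1
  simpa [smul_smul, inv_mul_cancel₀ hj, mulVec_evec] using this

lemma absorb_right (A : Matrix m n ℝ) (C : Matrix n n ℝ)
    (h : A * C = A) (hsym : Cᵀ = C) : dualW A * C = dualW A := by
  have hC : C * (Aᴴ * A) = Aᴴ * A := by
    have h2 : C * Aᴴ = Aᴴ := by
      have := congrArg Matrix.conjTranspose h
      rw [Matrix.conjTranspose_mul] at this
      rwa [show Cᴴ = C from by rw [conjTranspose_eq_transpose_of_trivial, hsym]] at this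
    rw [← Matrix.mul_assoc, h2]
  ext i k
  simp only [Matrix.mul_apply, dualW, Matrix.of_apply, Finset.sum_mul]
  rw [Finset.sum_comm]
  refine Finset.sum_congr rfl fun j _ => ?_
  by_cases hj : ev A j = 0
  · simp [Avec_eq_zero A j hj]
  · have hv : C *ᵥ evec A j = evec A j := evec_fix A C hC j hj
    have : ∑ a, (Real.sqrt (ev A j))⁻¹ * (A *ᵥ evec A j) i * evec A j a * C a k
        = (Real.sqrt (ev A j))⁻¹ * (A *ᵥ evec A j) i * (Cᵀ *ᵥ evec A j) k := by
      have : (Cᵀ *ᵥ evec A j) k = ∑ a, C a k * evec A j a := by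
        simp [Matrix.mulVec, dotProduct, Matrix.transpose_apply]
      rw [this, Finset.mul_sum]
      exact Finset.sum_congr rfl fun a _ => by ring
    rw [this, hsym, hv]


lemma sum_mul_expand {ι κ : Type*} [Fintype ι] [Fintype κ] (f g : ι → κ → ℝ) :
    ∑ i, (∑ j, f j i) * (∑ j, g j i) = ∑ j, ∑ j', ∑ i, f j i * g j' i := by
  calc ∑ i, (∑ j, f j i) * (∑ j, g j i)
      = ∑ i, ∑ j, ∑ j', f j i * g j' i := by
        refine Finset.sum_congr rfl fun i _ => ?_
        rw [Finset.sum_mul]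
        exact Finset.sum_congr rfl fun j _ => Finset.mul_sum _ _ _
    _ = ∑ j, ∑ i, ∑ j', f j i * g j' i := by rw [Finset.sum_comm]
    _ = ∑ j, ∑ j', ∑ i, f j i * g j' i := by
        exact Finset.sum_congr rfl fun j _ => by rw [Finset.sum_comm]

lemma dot_self_nonneg (x : m → ℝ) : 0 ≤ x ⬝ᵥ x :=
  Finset.sum_nonneg fun i _ => mul_self_nonneg (x i)

lemma parseval (A : Matrix m n ℝ) (x y : n → ℝ) :
    ∑ j, (evec A j ⬝ᵥ x) * (evec A j ⬝ᵥ y) = x ⬝ᵥ y := by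
  have h := sum_mul_expand (fun k j => evec A j k * x k) (fun k j => evec A j k * y k)
  calc ∑ j, (evec A j ⬝ᵥ x) * (evec A j ⬝ᵥ y)
      = ∑ k, ∑ l, ∑ j, (evec A j k * x k) * (evec A j l * y l) := h
    _ = ∑ k, ∑ l, (x k * y l) * ∑ j, evec A j k * evec A j l := by
        refine Finset.sum_congr rfl fun k _ => Finset.sum_congr rfl fun l _ => ?_
        rw [Finset.mul_sum]
        exact Finset.sum_congr rfl fun j _ => by ring
    _ = x ⬝ᵥ y := by
        simp only [evec_complete, mul_ite, mul_one, mul_zero,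
          Finset.sum_ite_eq, Finset.mem_univ, if_true]
        rfl

lemma ip_eq_sum_evec (A B C : Matrix m n ℝ) :
    ∑ j, (B *ᵥ evec A j) ⬝ᵥ (C *ᵥ evec A j) = ip B C := by
  calc ∑ j, (B *ᵥ evec A j) ⬝ᵥ (C *ᵥ evec A j)
      = ∑ j, ∑ i, (evec A j ⬝ᵥ (fun k => B i k)) * (evec A j ⬝ᵥ (fun k => C i k)) := by
        refine Finset.sum_congr rfl fun j _ => Finset.sum_congr rfl fun i _ => ?_
        simp [mulVec, dotProduct, mul_comm]
    _ = ∑ i, ∑ j, (evec A j ⬝ᵥ (fun k => B i k)) * (evec A j ⬝ᵥ (fun k => C i k)) := by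
        rw [Finset.sum_comm]
    _ = ip B C := by
        refine Finset.sum_congr rfl fun i _ => ?_
        rw [parseval]
        rfl

/-- trace duality / dual norm bound -/
lemma ip_le_nucNorm (B A : Matrix m n ℝ) (b : ℝ) (hb : 0 ≤ b)
    (hB : ∀ x, (B *ᵥ x) ⬝ᵥ (B *ᵥ x) ≤ b ^ 2 * (x ⬝ᵥ x)) :
    ip B A ≤ b * nucNorm A := by
  rw [← ip_eq_sum_evec A B A, nucNorm_eq, Finset.mul_sum]
  refine Finset.sum_le_sum fun j _ => ?_
  have hcs : (B *ᵥ evec A j) ⬝ᵥ (A *ᵥ evec A j) ≤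
      Real.sqrt ((B *ᵥ evec A j) ⬝ᵥ (B *ᵥ evec A j)) *
        Real.sqrt ((A *ᵥ evec A j) ⬝ᵥ (A *ᵥ evec A j)) := by
    have := Real.sum_mul_le_sqrt_mul_sqrt Finset.univ
      (fun i => (B *ᵥ evec A j) i) (fun i => (A *ᵥ evec A j) i)
    simpa [dotProduct, pow_two] using this
  have h1 : Real.sqrt ((B *ᵥ evec A j) ⬝ᵥ (B *ᵥ evec A j)) ≤ b := by
    have h2 : (B *ᵥ evec A j) ⬝ᵥ (B *ᵥ evec A j) ≤ b ^ 2 := by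
      have := hB (evec A j)
      rwa [evec_norm, mul_one] at this
    calc Real.sqrt ((B *ᵥ evec A j) ⬝ᵥ (B *ᵥ evec A j)) ≤ Real.sqrt (b ^ 2) :=
          Real.sqrt_le_sqrt h2
      _ = b := by rw [Real.sqrt_sq hb]
  calc (B *ᵥ evec A j) ⬝ᵥ (A *ᵥ evec A j)
      ≤ Real.sqrt ((B *ᵥ evec A j) ⬝ᵥ (B *ᵥ evec A j)) *
          Real.sqrt ((A *ᵥ evec A j) ⬝ᵥ (A *ᵥ evec A j)) := hcs
    _ ≤ b * Real.sqrt (ev A j) := by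
        rw [Avec_dot]
        exact mul_le_mul_of_nonneg_right h1 (Real.sqrt_nonneg _)

lemma opNorm_bound (B : Matrix m n ℝ) (x : n → ℝ) :
    (B *ᵥ x) ⬝ᵥ (B *ᵥ x) ≤ (opNorm B) ^ 2 * (x ⬝ᵥ x) := by
  have h := (LinearMap.toContinuousLinearMap (Matrix.toEuclideanLin B)).le_opNorm
    ((WithLp.equiv 2 (n → ℝ)).symm x)
  rw [LinearMap.coe_toContinuousLinearMap'] at h
  change ‖(WithLp.equiv 2 (m → ℝ)).symm (B *ᵥ x)‖ ≤ _ at h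
  have hnorm1 : ‖(WithLp.equiv 2 (m → ℝ)).symm (B *ᵥ x)‖
      = Real.sqrt ((B *ᵥ x) ⬝ᵥ (B *ᵥ x)) := by
    rw [EuclideanSpace.norm_eq]
    congr 1
    refine Finset.sum_congr rfl fun i _ => ?_
    simp [WithLp.equiv_symm_apply, Real.norm_eq_abs, sq_abs, pow_two, dotProduct]
  have hnorm2 : ‖(WithLp.equiv 2 (n → ℝ)).symm x‖ = Real.sqrt (x ⬝ᵥ x) := by
    rw [EuclideanSpace.norm_eq]
    congr 1
    refine Finset.sum_congr rfl fun i _ => ?_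
    simp [WithLp.equiv_symm_apply, Real.norm_eq_abs, sq_abs, pow_two, dotProduct]
  rw [hnorm1, hnorm2] at h
  have h2 : Real.sqrt ((B *ᵥ x) ⬝ᵥ (B *ᵥ x)) ≤ opNorm B * Real.sqrt (x ⬝ᵥ x) := h
  calc (B *ᵥ x) ⬝ᵥ (B *ᵥ x) = Real.sqrt ((B *ᵥ x) ⬝ᵥ (B *ᵥ x)) ^ 2 := by
        rw [Real.sq_sqrt (dot_self_nonneg _)]
    _ ≤ (opNorm B * Real.sqrt (x ⬝ᵥ x)) ^ 2 := by
        apply pow_le_pow_left₀ (Real.sqrt_nonneg _) h2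
    _ = (opNorm B) ^ 2 * (x ⬝ᵥ x) := by
        rw [mul_pow, Real.sq_sqrt (dot_self_nonneg _)]
lemma dualW_mulVec (A : Matrix m n ℝ) (x : n → ℝ) (i : m) :
    (dualW A *ᵥ x) i =
      ∑ j, ((Real.sqrt (ev A j))⁻¹ * (evec A j ⬝ᵥ x)) * (A *ᵥ evec A j) i := by
  calc (dualW A *ᵥ x) i
      = ∑ k, (∑ j, (Real.sqrt (ev A j))⁻¹ * (A *ᵥ evec A j) i * evec A j k) * x k := rfl
    _ = ∑ k, ∑ j, (Real.sqrt (ev A j))⁻¹ * (A *ᵥ evec A j) i * evec A j k * x k :=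
        Finset.sum_congr rfl fun k _ => Finset.sum_mul _ _ _
    _ = ∑ j, ∑ k, (Real.sqrt (ev A j))⁻¹ * (A *ᵥ evec A j) i * evec A j k * x k := by
        rw [Finset.sum_comm]
    _ = ∑ j, ((Real.sqrt (ev A j))⁻¹ * (evec A j ⬝ᵥ x)) * (A *ᵥ evec A j) i := by
        refine Finset.sum_congr rfl fun j _ => ?_
        rw [dotProduct, Finset.mul_sum, Finset.sum_mul]
        exact Finset.sum_congr rfl fun k _ => by ring

lemma dualW_contract (A : Matrix m n ℝ) (x : n → ℝ) :
    (dualW A *ᵥ x) ⬝ᵥ (dualW A *ᵥ x) ≤ x ⬝ᵥ x := by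
  set g : n → ℝ := fun j => (Real.sqrt (ev A j))⁻¹ * (evec A j ⬝ᵥ x) with hg
  calc (dualW A *ᵥ x) ⬝ᵥ (dualW A *ᵥ x)
      = ∑ i, (∑ j, g j * (A *ᵥ evec A j) i) * (∑ j, g j * (A *ᵥ evec A j) i) := by
        refine Finset.sum_congr rfl fun i _ => ?_
        rw [dualW_mulVec]
    _ = ∑ j, ∑ j', ∑ i, (g j * (A *ᵥ evec A j) i) * (g j' * (A *ᵥ evec A j') i) :=
        sum_mul_expand _ _
    _ = ∑ j, ∑ j', (g j * g j') * ((A *ᵥ evec A j) ⬝ᵥ (A *ᵥ evec A j')) := by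
        refine Finset.sum_congr rfl fun j _ => Finset.sum_congr rfl fun j' _ => ?_
        rw [dotProduct, Finset.mul_sum]
        exact Finset.sum_congr rfl fun i _ => by ring
    _ = ∑ j, ∑ j', (g j * g j') * (ev A j' * (if j = j' then 1 else 0)) := by
        refine Finset.sum_congr rfl fun j _ => Finset.sum_congr rfl fun j' _ => ?_
        rw [gram, mulVec_evec, dotProduct_smul, smul_eq_mul, evec_ortho]
    _ = ∑ j, (g j * g j) * ev A j := by
        refine Finset.sum_congr rfl fun j _ => ?_
        simp only [mul_ite, mul_one, mul_zero, Finset.sum_ite_eq, Finset.mem_univ, if_true]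
    _ ≤ ∑ j, (evec A j ⬝ᵥ x) * (evec A j ⬝ᵥ x) := by
        refine Finset.sum_le_sum fun j _ => ?_
        rw [hg]
        simp only []
        by_cases hj : ev A j = 0
        · simp [hj]
          exact mul_self_nonneg _
        · have hpos : 0 < ev A j := lt_of_le_of_ne (ev_nonneg A j) (Ne.symm hj)
          have hs : Real.sqrt (ev A j) > 0 := Real.sqrt_pos.mpr hpos
          have h1 : ((Real.sqrt (ev A j))⁻¹ * (Real.sqrt (ev A j))⁻¹) * ev A j = 1 := by
            rw [← Real.mul_self_sqrt (ev_nonneg A j)]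
            field_simp
            rw [Real.sqrt_sq hs.le]
          calc ((Real.sqrt (ev A j))⁻¹ * (evec A j ⬝ᵥ x)) *
                ((Real.sqrt (ev A j))⁻¹ * (evec A j ⬝ᵥ x)) * ev A j
              = ((evec A j ⬝ᵥ x) * (evec A j ⬝ᵥ x)) *
                (((Real.sqrt (ev A j))⁻¹ * (Real.sqrt (ev A j))⁻¹) * ev A j) := by ring
            _ ≤ (evec A j ⬝ᵥ x) * (evec A j ⬝ᵥ x) := by rw [h1, mul_one]

    _ = x ⬝ᵥ x := parseval A x x

lemma neg_contract (B : Matrix m n ℝ) (h : ∀ x, (B *ᵥ x) ⬝ᵥ (B *ᵥ x) ≤ x ⬝ᵥ x) (x : n → ℝ) :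
    ((-B) *ᵥ x) ⬝ᵥ ((-B) *ᵥ x) ≤ x ⬝ᵥ x := by
  rw [Matrix.neg_mulVec, neg_dotProduct, dotProduct_neg, neg_neg]
  exact h x

lemma ip_add_right (B C D : Matrix m n ℝ) : ip B (C + D) = ip B C + ip B D := by
  simp [ip, Matrix.add_apply, mul_add, Finset.sum_add_distrib]

lemma ip_neg_left (B C : Matrix m n ℝ) : ip (-B) C = -ip B C := by
  simp [ip, Matrix.neg_apply, Finset.sum_neg_distrib]

lemma ip_add_left (B C D : Matrix m n ℝ) : ip (B + C) D = ip B D + ip C D := by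
  simp [ip, Matrix.add_apply, add_mul, Finset.sum_add_distrib]

lemma nucNorm_nonneg (A : Matrix m n ℝ) : 0 ≤ nucNorm A := by
  rw [nucNorm_eq]; exact Finset.sum_nonneg fun j _ => Real.sqrt_nonneg _

lemma ip_eq_trace (X Y : Matrix m n ℝ) : ip X Y = Matrix.trace (Xᵀ * Y) := by
  simp only [ip, Matrix.trace, Matrix.diag_apply, Matrix.mul_apply, Matrix.transpose_apply]
  rw [Finset.sum_comm]

lemma frob_sq (X : Matrix m n ℝ) : frob X ^ 2 = ip X X := by
  rw [frob, Real.sq_sqrt (Finset.sum_nonneg fun i _ =>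
    Finset.sum_nonneg fun j _ => sq_nonneg (X i j))]
  simp [ip, pow_two]


lemma ip_sub_sub (X Y : Matrix m n ℝ) :
    ip (X - Y) (X - Y) = ip X X - 2 * ip X Y + ip Y Y := by
  unfold ip
  have h : ∀ i k, (X - Y) i k * (X - Y) i k
      = X i k * X i k - 2 * (X i k * Y i k) + Y i k * Y i k := fun i k => by
    simp only [Matrix.sub_apply]; ring
  calc ∑ i, ∑ k, (X - Y) i k * (X - Y) i k
      = ∑ i, ∑ k, (X i k * X i k - 2 * (X i k * Y i k) + Y i k * Y i k) := by
        exact Finset.sum_congr rfl fun i _ => Finset.sum_congr rfl fun k _ => h i k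
    _ = ∑ i, ∑ k, X i k * X i k - 2 * ∑ i, ∑ k, X i k * Y i k + ∑ i, ∑ k, Y i k * Y i k := by
        simp [Finset.sum_add_distrib, Finset.sum_sub_distrib, Finset.mul_sum]

lemma ip_self_nonneg (X : Matrix m n ℝ) : 0 ≤ ip X X :=
  Finset.sum_nonneg fun i _ => Finset.sum_nonneg fun k _ => mul_self_nonneg _

lemma trace_eq_sum_diag {p : Type*} [Fintype p] (D : Matrix p p ℝ) :
    Matrix.trace D = ∑ a, D a a := rfl

end NucAux

open NucAux

/-- Cone condition for the nuclear-norm penalized estimator. With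
`Z = L + S`, `rank L = K`, `c ∈ (0,1)`, `λ ≥ (2/(1−c))‖S‖`, a minimizer `L̂` of
`‖Z − A‖_F² + λ‖A‖_*`, and `𝒫, ℳ` the decomposability projections built from a
compact SVD of `L`, the error `Δ = L̂ − L` satisfies
`‖Δ‖_F² + cλ‖𝒫(Δ)‖_* ≤ (2 − c)λ‖ℳ(Δ)‖_*` and hence
`‖𝒫(Δ)‖_* ≤ ((2 − c)/c)‖ℳ(Δ)‖_*`. -/
theorem nuclear_norm_cone_condition
    (N T K : ℕ) (hKN : K ≤ N) (hKT : K ≤ T)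
    (L S : Matrix (Fin N) (Fin T) ℝ) (hrank : L.rank = K)
    (Uo : Matrix (Fin N) (Fin K) ℝ) (Do : Matrix (Fin K) (Fin K) ℝ)
    (Vo : Matrix (Fin T) (Fin K) ℝ)
    (Uc : Matrix (Fin N) (Fin (N - K)) ℝ) (Vc : Matrix (Fin T) (Fin (T - K)) ℝ)
    (hL : L = Uo * Do * Voᵀ)
    (hDo : Do.IsDiag) (hDpos : ∀ i, 0 < Do i i)
    (hUo : Uoᵀ * Uo = 1) (hVo : Voᵀ * Vo = 1)
    (hUc : Ucᵀ * Uc = 1) (hVc : Vcᵀ * Vc = 1)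
    (hUoc : Uoᵀ * Uc = 0) (hVoc : Voᵀ * Vc = 0)
    (hUcomp : Uo * Uoᵀ + Uc * Ucᵀ = 1) (hVcomp : Vo * Voᵀ + Vc * Vcᵀ = 1)
    (c : ℝ) (hc : c ∈ Set.Ioo (0 : ℝ) 1)
    (lam : ℝ) (hlam0 : 0 < lam) (hlam : 2 / (1 - c) * opNorm S ≤ lam)
    (Lhat : Matrix (Fin N) (Fin T) ℝ)
    (hmin : ∀ A : Matrix (Fin N) (Fin T) ℝ,
      frob (L + S - Lhat) ^ 2 + lam * nucNorm Lhat ≤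
        frob (L + S - A) ^ 2 + lam * nucNorm A) :
    frob (Lhat - L) ^ 2 +
        c * lam * nucNorm (Uc * Ucᵀ * (Lhat - L) * (Vc * Vcᵀ)) ≤
      (2 - c) * lam *
        nucNorm ((Lhat - L) - Uc * Ucᵀ * (Lhat - L) * (Vc * Vcᵀ)) ∧
    nucNorm (Uc * Ucᵀ * (Lhat - L) * (Vc * Vcᵀ)) ≤
      (2 - c) / c *
        nucNorm ((Lhat - L) - Uc * Ucᵀ * (Lhat - L) * (Vc * Vcᵀ)) := by
  obtain ⟨hc0, hc1⟩ := hc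
  have h1c : (0:ℝ) < 1 - c := by linarith
  set Δ : Matrix (Fin N) (Fin T) ℝ := Lhat - L with hΔ
  set P : Matrix (Fin N) (Fin T) ℝ := Uc * Ucᵀ * Δ * (Vc * Vcᵀ) with hP
  set M : Matrix (Fin N) (Fin T) ℝ := Δ - P with hM
  -- transposed orthogonality facts
  have hUocT : Ucᵀ * Uo = 0 := by
    have h := congrArg Matrix.transpose hUoc
    simpa [Matrix.transpose_mul] using h
  -- matrix algebra facts
  have hQUP : Uc * Ucᵀ * P = P := by
    rw [hP]
    simp only [← Matrix.mul_assoc]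
    rw [Matrix.mul_assoc Uc Ucᵀ Uc, hUc, Matrix.mul_one]
  have hPVQ : P * (Vc * Vcᵀ) = P := by
    rw [hP]
    simp only [← Matrix.mul_assoc]
    rw [Matrix.mul_assoc (Uc * Ucᵀ * Δ * Vc) Vcᵀ Vc, hVc, Matrix.mul_one]
  have hQVsym : (Vc * Vcᵀ)ᵀ = Vc * Vcᵀ := by
    rw [Matrix.transpose_mul, Matrix.transpose_transpose]
  have hUoP : Uoᵀ * P = 0 := by
    rw [hP]
    simp only [← Matrix.mul_assoc]
    rw [hUoc]
    simp
  have hQUL : Uc * Ucᵀ * L = 0 := by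
    rw [hL]
    simp only [← Matrix.mul_assoc]
    rw [Matrix.mul_assoc Uc Ucᵀ Uo, hUocT]
    simp
  -- ip values
  have hipWP_L : ip (dualW P) L = 0 := by
    have habs : Uc * Ucᵀ * dualW P = dualW P := absorb_left P (Uc * Ucᵀ) hQUP
    rw [ip_eq_trace, ← habs, Matrix.transpose_mul, Matrix.transpose_mul,
      Matrix.transpose_transpose, Matrix.mul_assoc, hQUL]
    simp
  have hipUoVo_L : ip (Uo * Voᵀ) L = ∑ a, Do a a := by
    rw [ip_eq_trace, hL, Matrix.transpose_mul, Matrix.transpose_transpose]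
    rw [show Vo * Uoᵀ * (Uo * Do * Voᵀ) = Vo * Uoᵀ * (Uo * Do) * Voᵀ from by
      simp only [Matrix.mul_assoc]]
    rw [Matrix.trace_mul_comm]
    simp only [← Matrix.mul_assoc]
    rw [hVo, Matrix.one_mul, hUo, Matrix.one_mul, trace_eq_sum_diag]
  have hipUoVo_P : ip (Uo * Voᵀ) P = 0 := by
    rw [ip_eq_trace, Matrix.transpose_mul, Matrix.transpose_transpose,
      Matrix.mul_assoc, hUoP]
    simp
  -- the dual certificate for the decomposability bound
  set W : Matrix (Fin N) (Fin T) ℝ := Uo * Voᵀ + dualW P with hW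
  have hWcontract : ∀ x, (W *ᵥ x) ⬝ᵥ (W *ᵥ x) ≤ x ⬝ᵥ x := by
    intro x
    have habsR : dualW P * (Vc * Vcᵀ) = dualW P := absorb_right P (Vc * Vcᵀ) hPVQ hQVsym
    have habsL : Uc * Ucᵀ * dualW P = dualW P := absorb_left P (Uc * Ucᵀ) hQUP
    set y := Voᵀ *ᵥ x with hy
    set z := Vcᵀ *ᵥ x with hz
    have hWx : W *ᵥ x = Uo *ᵥ y + dualW P *ᵥ x := by
      rw [hW, Matrix.add_mulVec, hy, Matrix.mulVec_mulVec]
    have hcross : (Uo *ᵥ y) ⬝ᵥ (dualW P *ᵥ x) = 0 := by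
      rw [dot1, Matrix.mulVec_mulVec]
      have h0 : Uoᵀ * dualW P = 0 := by
        rw [← habsL]
        simp only [← Matrix.mul_assoc]
        rw [hUoc]
        simp
      rw [h0]
      simp
    have huu : (Uo *ᵥ y) ⬝ᵥ (Uo *ᵥ y) = y ⬝ᵥ y := by
      rw [NucAux.gram, conjTranspose_eq_transpose_of_trivial, hUo, Matrix.one_mulVec]
    have hGx : dualW P *ᵥ x = dualW P *ᵥ (Vc *ᵥ z) := by
      conv_lhs => rw [← habsR]
      rw [hz, Matrix.mulVec_mulVec, Matrix.mulVec_mulVec, Matrix.mul_assoc]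
    have hGG : (dualW P *ᵥ x) ⬝ᵥ (dualW P *ᵥ x) ≤ z ⬝ᵥ z := by
      rw [hGx]
      calc (dualW P *ᵥ (Vc *ᵥ z)) ⬝ᵥ (dualW P *ᵥ (Vc *ᵥ z))
          ≤ (Vc *ᵥ z) ⬝ᵥ (Vc *ᵥ z) := dualW_contract P _
        _ = z ⬝ᵥ ((Vcᴴ * Vc) *ᵥ z) := NucAux.gram Vc z z
        _ = z ⬝ᵥ z := by
            rw [conjTranspose_eq_transpose_of_trivial, hVc, Matrix.one_mulVec]
    have hyy : y ⬝ᵥ y = x ⬝ᵥ ((Vo * Voᵀ) *ᵥ x) := by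
      rw [hy, NucAux.gram Voᵀ x x, conjTranspose_eq_transpose_of_trivial,
        Matrix.transpose_transpose]
    have hzz : z ⬝ᵥ z = x ⬝ᵥ ((Vc * Vcᵀ) *ᵥ x) := by
      rw [hz, NucAux.gram Vcᵀ x x, conjTranspose_eq_transpose_of_trivial,
        Matrix.transpose_transpose]
    have hsum : x ⬝ᵥ ((Vo * Voᵀ) *ᵥ x) + x ⬝ᵥ ((Vc * Vcᵀ) *ᵥ x) = x ⬝ᵥ x := by
      rw [← dotProduct_add, ← Matrix.add_mulVec, hVcomp, Matrix.one_mulVec]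
    have hexpand : (Uo *ᵥ y + dualW P *ᵥ x) ⬝ᵥ (Uo *ᵥ y + dualW P *ᵥ x)
        = (Uo *ᵥ y) ⬝ᵥ (Uo *ᵥ y) + 2 * ((Uo *ᵥ y) ⬝ᵥ (dualW P *ᵥ x))
          + (dualW P *ᵥ x) ⬝ᵥ (dualW P *ᵥ x) := by
      rw [add_dotProduct, dotProduct_add, dotProduct_add,
        dotProduct_comm (dualW P *ᵥ x) (Uo *ᵥ y)]
      ring
    rw [hWx, hexpand, hcross, huu]
    linarith [hGG, hyy, hzz, hsum]
  -- nuclear norm of L is at most the trace of Do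
  have hnucL : nucNorm L ≤ ∑ a, Do a a := by
    set G := dualW L with hG
    have htr : ip G L = Matrix.trace ((Voᵀ * Gᵀ * Uo) * Do) := by
      rw [ip_eq_trace, hL]
      rw [show Gᵀ * (Uo * Do * Voᵀ) = (Gᵀ * (Uo * Do)) * Voᵀ from by
        simp only [Matrix.mul_assoc]]
      rw [Matrix.trace_mul_comm]
      simp only [← Matrix.mul_assoc]
    have hdiag : Matrix.trace ((Voᵀ * Gᵀ * Uo) * Do)
        = ∑ a, (Voᵀ * Gᵀ * Uo) a a * Do a a := by
      rw [trace_eq_sum_diag]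
      refine Finset.sum_congr rfl fun a _ => ?_
      rw [Matrix.mul_apply]
      exact Finset.sum_eq_single a
        (fun b _ hb => by rw [hDo hb, mul_zero])
        (fun h => absurd (Finset.mem_univ a) h)
    have hbound : ∀ a : Fin K, (Voᵀ * Gᵀ * Uo) a a ≤ 1 := by
      intro a
      have hrepr : (Voᵀ * Gᵀ * Uo) a a
          = (G *ᵥ (fun k => Vo k a)) ⬝ᵥ (fun i => Uo i a) := by
        simp only [Matrix.mul_apply, Matrix.transpose_apply, Matrix.mulVec, dotProduct]
        refine Finset.sum_congr rfl fun i _ => ?_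
        congr 1
        exact Finset.sum_congr rfl fun k _ => mul_comm _ _
      have hv1 : ((fun k => Vo k a) ⬝ᵥ (fun k => Vo k a)) = 1 := by
        have h := congrFun (congrFun hVo a) a
        simpa [Matrix.mul_apply, Matrix.transpose_apply, Matrix.one_apply, dotProduct] using h
      have hu1 : ((fun i => Uo i a) ⬝ᵥ (fun i => Uo i a)) = 1 := by
        have h := congrFun (congrFun hUo a) a
        simpa [Matrix.mul_apply, Matrix.transpose_apply, Matrix.one_apply, dotProduct] using h
      have hcs : (G *ᵥ (fun k => Vo k a)) ⬝ᵥ (fun i => Uo i a)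
          ≤ Real.sqrt ((G *ᵥ (fun k => Vo k a)) ⬝ᵥ (G *ᵥ (fun k => Vo k a)))
            * Real.sqrt (((fun i => Uo i a) ⬝ᵥ (fun i => Uo i a))) := by
        have := Real.sum_mul_le_sqrt_mul_sqrt Finset.univ
          (fun i => (G *ᵥ (fun k => Vo k a)) i) (fun i => Uo i a)
        simpa [dotProduct, pow_two] using this
      have hGle : (G *ᵥ (fun k => Vo k a)) ⬝ᵥ (G *ᵥ (fun k => Vo k a)) ≤ 1 := by
        calc (G *ᵥ (fun k => Vo k a)) ⬝ᵥ (G *ᵥ (fun k => Vo k a))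
            ≤ (fun k => Vo k a) ⬝ᵥ (fun k => Vo k a) := by rw [hG]; exact dualW_contract L _
          _ = 1 := hv1
      calc (Voᵀ * Gᵀ * Uo) a a
          = (G *ᵥ (fun k => Vo k a)) ⬝ᵥ (fun i => Uo i a) := hrepr
        _ ≤ Real.sqrt ((G *ᵥ (fun k => Vo k a)) ⬝ᵥ (G *ᵥ (fun k => Vo k a)))
            * Real.sqrt (((fun i => Uo i a) ⬝ᵥ (fun i => Uo i a))) := hcs
        _ ≤ 1 := by
            rw [hu1, Real.sqrt_one, mul_one]
            calc Real.sqrt ((G *ᵥ (fun k => Vo k a)) ⬝ᵥ (G *ᵥ (fun k => Vo k a)))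
                ≤ Real.sqrt 1 := Real.sqrt_le_sqrt hGle
              _ = 1 := Real.sqrt_one
    calc nucNorm L = ip G L := (ip_dualW_self L).symm
      _ = ∑ a, (Voᵀ * Gᵀ * Uo) a a * Do a a := by rw [htr, hdiag]
      _ ≤ ∑ a, Do a a := by
          refine Finset.sum_le_sum fun a _ => ?_
          calc (Voᵀ * Gᵀ * Uo) a a * Do a a ≤ 1 * Do a a :=
                mul_le_mul_of_nonneg_right (hbound a) (hDpos a).le
            _ = Do a a := one_mul _
  -- lower bound on nucNorm Lhat
  have hLhatlow : (∑ a, Do a a) + nucNorm P - nucNorm M ≤ nucNorm Lhat := by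
    have hW1 : ip W Lhat ≤ nucNorm Lhat := by
      have := ip_le_nucNorm W Lhat 1 zero_le_one fun x => by simpa using hWcontract x
      linarith
    have hsplit : Lhat = L + P + M := by rw [hM, hΔ]; abel
    have hWeq : ip W Lhat = (∑ a, Do a a) + nucNorm P + ip W M := by
      rw [hsplit, ip_add_right, ip_add_right, hW, ip_add_left, ip_add_left,
        hipWP_L, hipUoVo_L, hipUoVo_P, ip_dualW_self]
      ring
    have hWM : -nucNorm M ≤ ip W M := by
      have h := ip_le_nucNorm (-W) M 1 zero_le_one fun x => by
        simpa using neg_contract W hWcontract x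
      rw [ip_neg_left, one_mul] at h
      linarith
    linarith
  -- triangle inequality for the nuclear norm
  have htri : nucNorm Δ ≤ nucNorm P + nucNorm M := by
    have hPM : P + M = Δ := by rw [hM]; abel
    have h1 : ip (dualW Δ) P ≤ nucNorm P := by
      have := ip_le_nucNorm (dualW Δ) P 1 zero_le_one fun x => by
        simpa using dualW_contract Δ x
      linarith
    have h2 : ip (dualW Δ) M ≤ nucNorm M := by
      have := ip_le_nucNorm (dualW Δ) M 1 zero_le_one fun x => by
        simpa using dualW_contract Δ x
      linarith
    calc nucNorm Δ = ip (dualW Δ) Δ := (ip_dualW_self Δ).symm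
      _ = ip (dualW Δ) P + ip (dualW Δ) M := by rw [← hPM, ip_add_right]
      _ ≤ nucNorm P + nucNorm M := add_le_add h1 h2
  -- dual norm bound on the noise term
  have hSD : ip S Δ ≤ opNorm S * nucNorm Δ :=
    ip_le_nucNorm S Δ (opNorm S) (norm_nonneg _) fun x => opNorm_bound S x
  have hopS : opNorm S ≤ (1 - c) / 2 * lam := by
    have h := mul_le_mul_of_nonneg_left hlam (by positivity : (0:ℝ) ≤ (1 - c) / 2)
    have heq : (1 - c) / 2 * (2 / (1 - c) * opNorm S) = opNorm S := by
      field_simp [h1c.ne']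
    linarith [heq ▸ h]
  -- basic inequality from minimality
  have hbasic : ip Δ Δ ≤ 2 * ip S Δ + lam * (nucNorm L - nucNorm Lhat) := by
    have h := hmin L
    have hZL : L + S - L = S := by abel
    have hZLhat : L + S - Lhat = S - Δ := by rw [hΔ]; abel
    rw [hZL, hZLhat, frob_sq, frob_sq, ip_sub_sub] at h
    linarith
  -- put everything together
  have hnucD : 0 ≤ nucNorm Δ := nucNorm_nonneg Δ
  have hnucP : 0 ≤ nucNorm P := nucNorm_nonneg P
  have hnucM : 0 ≤ nucNorm M := nucNorm_nonneg M
  have hSD2 : ip S Δ ≤ (1 - c) / 2 * lam * (nucNorm P + nucNorm M) := by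
    calc ip S Δ ≤ opNorm S * nucNorm Δ := hSD
      _ ≤ ((1 - c) / 2 * lam) * nucNorm Δ := mul_le_mul_of_nonneg_right hopS hnucD
      _ ≤ ((1 - c) / 2 * lam) * (nucNorm P + nucNorm M) := by
          refine mul_le_mul_of_nonneg_left htri (by positivity)
  have hlamL : lam * nucNorm L ≤ lam * (∑ a, Do a a) :=
    mul_le_mul_of_nonneg_left hnucL hlam0.le
  have hlamLhat : lam * ((∑ a, Do a a) + nucNorm P - nucNorm M) ≤ lam * nucNorm Lhat :=
    mul_le_mul_of_nonneg_left hLhatlow hlam0.le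
  have hkey : ip Δ Δ + c * lam * nucNorm P ≤ (2 - c) * lam * nucNorm M := by nlinarith
  have hfrobD : frob Δ ^ 2 = ip Δ Δ := frob_sq Δ
  constructor
  · rw [hfrobD]; exact hkey
  · have hipDD : 0 ≤ ip Δ Δ := ip_self_nonneg Δ
    have h2 : c * nucNorm P ≤ (2 - c) * nucNorm M := by
      have h3 : lam * (c * nucNorm P) ≤ lam * ((2 - c) * nucNorm M) := by
        calc lam * (c * nucNorm P) = c * lam * nucNorm P := by ring
          _ ≤ (2 - c) * lam * nucNorm M := by linarith
          _ = lam * ((2 - c) * nucNorm M) := by ring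
      exact le_of_mul_le_mul_left h3 hlam0
    rw [div_mul_eq_mul_div, le_div_iff₀ hc0, mul_comm]
    exact h2
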